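/- Let Q be the infinite matrix with entries Q_{ij} = i^{−3/2} j^{1/2} (log i − log j)/(i² − j²) for positive integers i ≠ j and Q_{ii} = i^{−2}/2. Then ∑_{i,j=1}^{∞} |Q_{ij}|² < ∞, i.e., Q is a Hilbert–Schmidt (hence bounded) operator on ℓ². -/

import Mathlib

open Real

/-- The entries `Q_{ij} = i^{-3/2} j^{1/2} (log i - log j)/(i² - j²)` for `i ≠ j`,
`Q_{ii} = i^{-2}/2`. -/
noncomputable def Qent (i j : ℕ+) : ℝ :=
  if i = j then (i : ℝ) ^ (-2 : ℝ) / 2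
  else (i : ℝ) ^ (-(3 : ℝ) / 2) * (j : ℝ) ^ ((1 : ℝ) / 2) *
    (Real.log i - Real.log j) / ((i : ℝ) ^ 2 - (j : ℝ) ^ 2)

/-! The logarithmic mean dominates the geometric mean, in the weak form
`|log x - log y| ≤ 2 |x - y| / √(xy)`. With it, `|Q_{ij}|² ≤ 4 / (i⁴ (i + j)²) ≤ 4 / (i² j²)`
off the diagonal, and `∑ 1 / (i² j²)` is a product of two convergent `p`-series. -/

namespace Real

lemma abs_log_le_abs_sub_inv {s : ℝ} (hs : 0 < s) : |log s| ≤ |s - s⁻¹| := by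
  rcases le_total 1 s with h | h
  · have hinv : s⁻¹ ≤ 1 := inv_le_one_of_one_le₀ h
    rw [abs_of_nonneg (log_nonneg h), abs_of_nonneg (by linarith)]
    linarith [log_le_sub_one_of_pos hs]
  · have hinv : 1 ≤ s⁻¹ := one_le_inv₀ hs |>.2 h
    rw [abs_of_nonpos (log_nonpos hs.le h), abs_of_nonpos (by linarith), ← log_inv]
    linarith [log_le_sub_one_of_pos (inv_pos.2 hs)]

lemma sq_log_sub_log_le {x y : ℝ} (hx : 0 < x) (hy : 0 < y) :
    (log x - log y) ^ 2 ≤ 4 * (x - y) ^ 2 / (x * y) := by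
  set s := √(x / y)
  have hs : 0 < s := sqrt_pos.2 (div_pos hx hy)
  have hs2 : s ^ 2 = x / y := sq_sqrt (div_pos hx hy).le
  have hlog : log x - log y = 2 * log s := by
    rw [log_sqrt (div_pos hx hy).le, log_div hx.ne' hy.ne']
    ring
  have hsub : (s - s⁻¹) ^ 2 = (x - y) ^ 2 / (x * y) := by
    have : s⁻¹ ^ 2 = y / x := by rw [inv_pow, hs2, inv_div]
    rw [sub_sq, mul_assoc, mul_inv_cancel₀ hs.ne', hs2, this]
    field_simp
    ring
  calc (log x - log y) ^ 2 = 4 * |log s| ^ 2 := by rw [hlog, sq_abs]; ring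
    _ ≤ 4 * |s - s⁻¹| ^ 2 := by gcongr 4 * ?_ ^ 2; exact abs_log_le_abs_sub_inv hs
    _ = 4 * (x - y) ^ 2 / (x * y) := by rw [sq_abs, hsub, mul_div_assoc]

end Real

lemma offDiag_sq_le {x y : ℝ} (hx : 1 ≤ x) (hy : 0 < y) (hxy : x ≠ y) :
    (x ^ (-(3 : ℝ) / 2) * y ^ ((1 : ℝ) / 2) * (log x - log y) / (x ^ 2 - y ^ 2)) ^ 2 ≤
      4 / (x ^ 2 * y ^ 2) := by
  have hx0 : 0 < x := one_pos.trans_le hx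
  have hpow_x : (x ^ (-(3 : ℝ) / 2)) ^ 2 = (x ^ 3)⁻¹ := by
    rw [← rpow_natCast, ← rpow_mul hx0.le, ← rpow_natCast, ← rpow_neg hx0.le]
    norm_num
  have hpow_y : (y ^ ((1 : ℝ) / 2)) ^ 2 = y := by
    rw [← rpow_natCast, ← rpow_mul hy.le]
    norm_num
  calc (x ^ (-(3 : ℝ) / 2) * y ^ ((1 : ℝ) / 2) * (log x - log y) / (x ^ 2 - y ^ 2)) ^ 2
      = (x ^ 3)⁻¹ * y * (log x - log y) ^ 2 / ((x - y) ^ 2 * (x + y) ^ 2) := by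
        rw [div_pow, mul_pow, mul_pow, hpow_x, hpow_y]
        ring
    _ ≤ (x ^ 3)⁻¹ * y * (4 * (x - y) ^ 2 / (x * y)) / ((x - y) ^ 2 * (x + y) ^ 2) := by
        gcongr
        exact sq_log_sub_log_le hx0 hy
    _ = 4 / (x ^ 4 * (x + y) ^ 2) := by
        field_simp
    _ ≤ 4 / (x ^ 2 * y ^ 2) := by
        have hy_le : y ≤ x * (x + y) := by nlinarith
        gcongr 4 / ?_
        calc x ^ 2 * y ^ 2 ≤ x ^ 2 * (x * (x + y)) ^ 2 := by gcongr
          _ = x ^ 4 * (x + y) ^ 2 := by ring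

lemma Qent_sq_le (i j : ℕ+) : Qent i j ^ 2 ≤ 4 / ((i : ℝ) ^ 2 * (j : ℝ) ^ 2) := by
  have hi : (1 : ℝ) ≤ i := by exact_mod_cast i.pos
  unfold Qent
  split_ifs with h
  · subst h
    rw [rpow_neg (by positivity), rpow_two]
    field_simp
    nlinarith
  · exact offDiag_sq_le hi (by positivity) (by exact_mod_cast h)

/-- `∑_{i,j} |Q_{ij}|² < ∞`: `Q` is a Hilbert–Schmidt (hence bounded) operator on `ℓ²`. -/
theorem stmt_8 : Summable (fun p : ℕ+ × ℕ+ => |Qent p.1 p.2| ^ 2) := by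
  have hinvSq : Summable (fun n : ℕ+ => ((n : ℝ) ^ 2)⁻¹) :=
    (summable_pnat_iff_summable_nat (f := fun n : ℕ => ((n : ℝ) ^ 2)⁻¹)).2
      (summable_nat_pow_inv.2 one_lt_two)
  have hprod : Summable (fun p : ℕ+ × ℕ+ => 4 / ((p.1 : ℝ) ^ 2 * (p.2 : ℝ) ^ 2)) := by
    simpa only [div_eq_mul_inv, mul_inv] using
      ((hinvSq.mul_of_nonneg hinvSq (fun _ => by positivity) (fun _ => by positivity)).mul_left 4)
  refine hprod.of_nonneg_of_le (fun _ => by positivity) fun p => ?_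
  rw [sq_abs]
  exact Qent_sq_le p.1 p.2
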